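/- There exists a finite rotation-puzzle instance 𝒜 over the two-color tile set T_2 (the two-color MOVE subpuzzle, moving a wire sideways) with a designated input boundary edge at its bottom and a designated output boundary edge at its top horizontally displaced by two positions from the input edge, such that for each color c ∈ {blue, red} the instance 𝒜 has exactly one solution whose color at the input edge is c, and this solution has color c at the output edge. -/

import Mathlib

/-- The two Tantrix colors used in the two-color tile set. -/
inductive Color where
  | red
  | blue
deriving DecidableEq

/-- A tile is its clockwise color sequence: a word of length 6 over the colors,
edges indexed `0, …, 5` clockwise. -/
abbrev Tile := Fin 6 → Color

/-- Cyclic rotation of a tile by `k` steps: edge `i` of the rotated tile carries the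
color of edge `i + k` of the original sequence.  Two solutions are compared as the
assigned rotated color sequences, so orientations of a tile with identical color
sequences are identified. -/
def rotTile (k : Fin 6) (t : Tile) : Tile := fun i => t (i + k)

open Color in
/-- The two-color tile set `T₂`, consisting of the 8 color sequences
bbrrrr, rrbbbb, brrbrr, rbbrbb, rbrrrb, brbbbr, bbbbbb, rrrrrr. -/
def T2 : Set Tile :=
  { ![blue,blue,red,red,red,red],
    ![red,red,blue,blue,blue,blue],
    ![blue,red,red,blue,red,red],
    ![red,blue,blue,red,blue,blue],
    ![red,blue,red,red,red,blue],
    ![blue,red,blue,blue,blue,red],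
    ![blue,blue,blue,blue,blue,blue],
    ![red,red,red,red,red,red] }

/-- The six neighbor offsets of the hexagonal layout of `ℤ²`, listed clockwise
starting from straight up; edge `i` of a tile at `x` is the edge shared with the
neighboring point `x + dirs i`, and opposite directions differ by `3` (mod 6).
Two points are neighbors exactly if their difference is one of these offsets. -/
def dirs : Fin 6 → ℤ × ℤ := ![(0,1), (1,1), (1,0), (0,-1), (-1,-1), (-1,0)]

/-- A finite rotation-puzzle instance over the tile set `T2`:
a function from a finite set of points of `ℤ²` to `T2`. -/
structure Puzzle where
  tiles : ℤ × ℤ → Option Tile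
  finite : {x | tiles x ≠ none}.Finite
  memT2 : ∀ x t, tiles x = some t → t ∈ T2

/-- `sol` is a solution of the instance `P`: it assigns to each occupied point a
cyclic rotation of the tile placed there, such that for every pair of neighboring
occupied points the two assigned sequences give the same color to their joint edge
(edge `d` of the tile at `x` is glued to edge `d + 3` of the tile at `x + dirs d`). -/
def IsSolution (P : Puzzle) (sol : ℤ × ℤ → Option Tile) : Prop :=
  (∀ x, (P.tiles x = none → sol x = none) ∧
    (∀ t, P.tiles x = some t → ∃ k : Fin 6, sol x = some (rotTile k t))) ∧
  (∀ (x : ℤ × ℤ) (d : Fin 6) (s s' : Tile),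
    sol x = some s → sol (x + dirs d) = some s' → s d = s' (d + 3))

/-- `(x, d)` is a boundary edge of `P`: the point `x` is occupied and its
neighbor in direction `d` is not. -/
def IsBoundary (P : Puzzle) (x : ℤ × ℤ) (d : Fin 6) : Prop :=
  P.tiles x ≠ none ∧ P.tiles (x + dirs d) = none

/-- The solution `sol` has color `c` at the edge in direction `d` of the tile at `x`. -/
def SolColor (sol : ℤ × ℤ → Option Tile) (x : ℤ × ℤ) (d : Fin 6) (c : Color) : Prop :=
  ∃ s, sol x = some s ∧ s d = c
/-!
The instance consists of five tiles at the points A = (0,0), B = (0,1), C = (1,2), D = (1,1),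
E = (2,2), forming the strip of triangles ABD, BCD, CDE; the wire enters at the bottom of A and
leaves at the top of E. A solution is the same as a choice of rotation for each tile that matches
along the seven joint edges, so everything reduces to a finite search: placing A, B, D, C, E in
turn, each input color admits exactly one complete placement, and in it the top edge of E has
the input color.
-/

open Function

section Layout

variable {ι : Type*} (pos : ι → ℤ × ℤ)

noncomputable def layout (g : ι → Tile) : ℤ × ℤ → Option Tile :=
  extend pos (fun i => some (g i)) fun _ => none

def orient (ts : ι → Tile) (k : ι → Fin 6) : ι → Tile := fun i => rotTile (k i) (ts i)

def EdgesMatch (g : ι → Tile) : Prop :=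
  ∀ i j d, pos j = pos i + dirs d → g i d = g j (d + 3)

variable {pos}

theorem layout_apply (hpos : Injective pos) (g : ι → Tile) (i : ι) :
    layout pos g (pos i) = some (g i) :=
  hpos.extend_apply _ _ i

theorem layout_eq_none_iff {g : ι → Tile} {x : ℤ × ℤ} :
    layout pos g x = none ↔ ¬∃ i, pos i = x := by
  classical
  rw [layout, extend_def]
  split_ifs with hx <;> simp [hx]

theorem exists_of_layout_eq_some {g : ι → Tile} {x : ℤ × ℤ} {t : Tile}
    (h : layout pos g x = some t) : ∃ i, pos i = x ∧ g i = t := by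
  classical
  have hx : ∃ i, pos i = x := not_not.1 fun hx => by simp [layout_eq_none_iff.2 hx] at h
  rw [layout, extend_def, dif_pos hx, Option.some_inj] at h
  exact ⟨_, hx.choose_spec, h⟩

theorem solColor_layout_iff (hpos : Injective pos) {g : ι → Tile} {i : ι} {d : Fin 6}
    {c : Color} : SolColor (layout pos g) (pos i) d c ↔ g i d = c := by
  simp [SolColor, layout_apply hpos]

variable (pos) in
noncomputable def Puzzle.ofLayout [Finite ι] (ts : ι → Tile) (hts : ∀ i, ts i ∈ T2) : Puzzle where
  tiles := layout pos ts
  finite := (Set.finite_range pos).subset fun _ hx => not_not.1 fun hx' =>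
    hx (layout_eq_none_iff.2 hx')
  memT2 x t h := by
    obtain ⟨i, -, rfl⟩ := exists_of_layout_eq_some h
    exact hts i

variable [Finite ι] {ts : ι → Tile} {hts : ∀ i, ts i ∈ T2}

theorem isBoundary_ofLayout (i : ι) {d : Fin 6} (hd : ∀ j, pos j ≠ pos i + dirs d) :
    IsBoundary (Puzzle.ofLayout pos ts hts) (pos i) d :=
  ⟨fun h => layout_eq_none_iff.1 h ⟨i, rfl⟩, layout_eq_none_iff.2 fun ⟨j, hj⟩ => hd j hj⟩

theorem isSolution_ofLayout_iff (hpos : Injective pos) {sol : ℤ × ℤ → Option Tile} :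
    IsSolution (Puzzle.ofLayout pos ts hts) sol ↔
      ∃ k : ι → Fin 6, sol = layout pos (orient ts k) ∧ EdgesMatch pos (orient ts k) := by
  constructor
  · rintro ⟨hocc, hmatch⟩
    choose k hk using fun i => (hocc (pos i)).2 (ts i) (layout_apply hpos ts i)
    refine ⟨k, funext fun x => ?_, fun i j d hij => hmatch (pos i) d _ _ (hk i) (hij ▸ hk j)⟩
    by_cases hx : ∃ i, pos i = x
    · obtain ⟨i, rfl⟩ := hx
      rw [hk, layout_apply hpos]
      rfl
    · rw [(hocc x).1 (layout_eq_none_iff.2 hx), layout_eq_none_iff.2 hx]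
  · rintro ⟨k, rfl, hk⟩
    refine ⟨fun x => ⟨fun hx => ?_, fun t ht => ?_⟩, fun x d s s' hs hs' => ?_⟩
    · exact layout_eq_none_iff.2 (layout_eq_none_iff.1 hx)
    · obtain ⟨i, rfl, rfl⟩ := exists_of_layout_eq_some ht
      exact ⟨k i, layout_apply hpos _ i⟩
    · obtain ⟨i, rfl, rfl⟩ := exists_of_layout_eq_some hs
      obtain ⟨j, hj, rfl⟩ := exists_of_layout_eq_some hs'
      exact hk i j d hj

end Layout

section Move

open Color

def movePos : Fin 5 → ℤ × ℤ := ![(0, 0), (0, 1), (1, 2), (1, 1), (2, 2)]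

def moveTiles : Fin 5 → Tile :=
  ![![blue, red, red, blue, red, red], ![red, red, blue, blue, blue, blue],
    ![blue, red, red, blue, red, red], ![red, blue, blue, red, blue, blue],
    ![red, red, blue, blue, blue, blue]]

theorem moveTiles_mem_T2 (i : Fin 5) : moveTiles i ∈ T2 := by
  simp only [T2, Set.mem_insert_iff, Set.mem_singleton_iff]
  fin_cases i <;> decide

noncomputable def movePuzzle : Puzzle := Puzzle.ofLayout movePos moveTiles moveTiles_mem_T2

theorem movePos_injective : Injective movePos := by decide

def moveOrientation : Color → Fin 5 → Fin 6
  | blue => ![0, 0, 0, 2, 2]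
  | red => ![2, 3, 2, 0, 1]

theorem edgesMatch_moveOrientation (c : Color) :
    EdgesMatch movePos (orient moveTiles (moveOrientation c)) := by
  unfold EdgesMatch
  cases c <;> decide

-- Stated tile by tile so that `decide` discards a partial placement as soon as it fails.
set_option synthInstance.maxSize 2000 in
theorem move_placement_forced (c : Color) :
    ∀ kA : Fin 6, rotTile kA (moveTiles 0) 3 = c →
    ∀ kB : Fin 6, rotTile kA (moveTiles 0) 0 = rotTile kB (moveTiles 1) 3 →
    ∀ kD : Fin 6, rotTile kA (moveTiles 0) 1 = rotTile kD (moveTiles 3) 4 →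
      rotTile kB (moveTiles 1) 2 = rotTile kD (moveTiles 3) 5 →
    ∀ kC : Fin 6, rotTile kB (moveTiles 1) 1 = rotTile kC (moveTiles 2) 4 →
      rotTile kD (moveTiles 3) 0 = rotTile kC (moveTiles 2) 3 →
    ∀ kE : Fin 6, rotTile kC (moveTiles 2) 2 = rotTile kE (moveTiles 4) 5 →
      rotTile kD (moveTiles 3) 1 = rotTile kE (moveTiles 4) 4 →
    orient moveTiles ![kA, kB, kC, kD, kE] = orient moveTiles (moveOrientation c) := by
  cases c <;> decide +kernel

theorem orient_eq_moveOrientation {k : Fin 5 → Fin 6} {c : Color}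
    (hc : orient moveTiles k 0 3 = c) (hk : EdgesMatch movePos (orient moveTiles k)) :
    orient moveTiles k = orient moveTiles (moveOrientation c) := by
  have hk_eta : ![k 0, k 1, k 2, k 3, k 4] = k := by
    ext i
    fin_cases i <;> rfl
  rw [← hk_eta]
  exact move_placement_forced c _ hc _ (hk 0 1 0 rfl) _ (hk 0 3 1 rfl) (hk 1 3 2 rfl)
    _ (hk 1 2 1 rfl) (hk 3 2 0 rfl) _ (hk 2 4 2 rfl) (hk 3 4 1 rfl)

end Move

/-- the two-color MOVE subpuzzle: input boundary edge at the bottom, output boundary edge at the top horizontally displaced by two positions; for each color `c ∈ {blue, red}` there is exactly one solution with color `c` at the input edge, and it has color `c` at the output edge. -/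
theorem two_color_MOVE_subpuzzle :
    ∃ (P : Puzzle) (xIn xOut : ℤ × ℤ),
      IsBoundary P xIn 3 ∧ IsBoundary P xOut 0 ∧
      (xOut.1 = xIn.1 + 2 ∨ xOut.1 = xIn.1 - 2) ∧ xIn.2 < xOut.2 ∧
      ∀ c ∈ ({Color.blue, Color.red} : Set Color),
        ∃ sol : ℤ × ℤ → Option Tile,
          (IsSolution P sol ∧ SolColor sol xIn 3 c ∧ SolColor sol xOut 0 c) ∧
          (∀ sol' : ℤ × ℤ → Option Tile,
            IsSolution P sol' → SolColor sol' xIn 3 c → sol' = sol) := by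
  refine ⟨movePuzzle, movePos 0, movePos 4, isBoundary_ofLayout 0 (by decide),
    isBoundary_ofLayout 4 (by decide), Or.inl (by decide), by decide, fun c _ => ?_⟩
  refine ⟨layout movePos (orient moveTiles (moveOrientation c)), ⟨?_, ?_, ?_⟩, ?_⟩
  · exact (isSolution_ofLayout_iff movePos_injective).2 ⟨_, rfl, edgesMatch_moveOrientation c⟩
  · exact (solColor_layout_iff movePos_injective).2 (by cases c <;> rfl)
  · exact (solColor_layout_iff movePos_injective).2 (by cases c <;> rfl)
  · intro sol hsol hc
    obtain ⟨k, rfl, hk⟩ := (isSolution_ofLayout_iff movePos_injective).1 hsol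
    rw [orient_eq_moveOrientation ((solColor_layout_iff movePos_injective).1 hc) hk]
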